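/- Let H_p = α_p E + (1 − rα_p) I ∈ R^{r×r} with α_p = (1/r)(1 − (1/√(r−1))·(q/p)), where E is the all-ones matrix, p ∈ [1, √(r−1)], q = √(r − p²), r ≥ 2. Then each column v_i of H_p satisfies e^T v_i = 1 and p‖v_i‖ = 1, i.e. the columns lie on the boundary of the cone S_p intersected with the unit simplex. -/

import Mathlib

/-!
Write `α_p = (1 - t) / r` with `t = q / (√(r - 1) p)`. A column of `H_p` has `r - 1` entries
`α_p` and one entry `1 - (r - 1) α_p`, so its squared norm is `(1 + (r - 1) t²) / r`.
Since `(r - 1) t² = q² / p² = (r - p²) / p²`, this is `1 / p²`.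
-/

open scoped BigOperators

/-- The `i`-th column of `H_p = α_p E + (1 - r α_p) I`, as a Euclidean vector. -/
noncomputable def HpCol (r : ℕ) (α : ℝ) (i : Fin r) : EuclideanSpace ℝ (Fin r) :=
  (WithLp.equiv 2 (Fin r → ℝ)).symm fun j => α + if j = i then 1 - (r : ℝ) * α else 0

theorem HpCol_apply (r : ℕ) (α : ℝ) (i j : Fin r) :
    HpCol r α i j = α + if j = i then 1 - (r : ℝ) * α else 0 :=
  rfl

theorem sum_HpCol (r : ℕ) (α : ℝ) (i : Fin r) : ∑ j, HpCol r α i j = 1 := by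
  simp only [HpCol_apply, Finset.sum_add_distrib, Finset.sum_ite_eq', Finset.mem_univ, if_true,
    Finset.sum_const, Finset.card_univ, Fintype.card_fin, nsmul_eq_mul]
  ring

theorem norm_HpCol_sq (r : ℕ) (α : ℝ) (i : Fin r) :
    ‖HpCol r α i‖ ^ 2 = (r - 1) * α ^ 2 + (1 - (r - 1) * α) ^ 2 := by
  have hsq : ∀ j, HpCol r α i j ^ 2
      = α ^ 2 + if j = i then (1 - (r - 1) * α) ^ 2 - α ^ 2 else 0 := by
    intro j
    rw [HpCol_apply]
    split_ifs <;> ring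
  simp only [EuclideanSpace.norm_sq_eq, Real.norm_eq_abs, sq_abs, hsq, Finset.sum_add_distrib,
    Finset.sum_ite_eq', Finset.mem_univ, if_true, Finset.sum_const, Finset.card_univ,
    Fintype.card_fin, nsmul_eq_mul]
  ring

theorem norm_HpCol_sq_of_eq_div {r : ℕ} (hr : 0 < r) (t : ℝ) (i : Fin r) :
    ‖HpCol r ((1 - t) / r) i‖ ^ 2 = (1 + (r - 1) * t ^ 2) / r := by
  rw [norm_HpCol_sq]
  field_simp
  ring

theorem stmt8_general (r : ℕ) (p q α : ℝ) (hp1 : 1 ≤ p)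
    (hpr : p ≤ Real.sqrt ((r : ℝ) - 1))
    (hq : q = Real.sqrt ((r : ℝ) - p ^ 2))
    (hα : α = (1 / (r : ℝ)) * (1 - (1 / Real.sqrt ((r : ℝ) - 1)) * (q / p))) :
    ∀ i : Fin r, (∑ j, HpCol r α i j = 1) ∧ p * ‖HpCol r α i‖ = 1 := by
  intro i
  have hp : 0 < p := by linarith
  have hr1 : 1 ≤ (r : ℝ) - 1 := Real.one_le_sqrt.mp (hp1.trans hpr)
  have hr0 : 0 < r := by exact_mod_cast (show (0 : ℝ) < r by linarith)
  have hq2 : q ^ 2 = r - p ^ 2 := by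
    have : p ^ 2 ≤ (r : ℝ) - 1 := (Real.le_sqrt' hp).mp hpr
    rw [hq, Real.sq_sqrt (by linarith)]
  set t := q / (Real.sqrt ((r : ℝ) - 1) * p)
  have hαt : α = (1 - t) / r := by rw [hα]; ring
  have ht : ((r : ℝ) - 1) * t ^ 2 = q ^ 2 / p ^ 2 := by
    rw [div_pow, mul_pow, Real.sq_sqrt (by linarith)]
    field_simp
  have hnorm : ‖HpCol r α i‖ ^ 2 = 1 / p ^ 2 := by
    rw [hαt, norm_HpCol_sq_of_eq_div hr0, ht, hq2]
    field_simp
    ring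
  refine ⟨sum_HpCol r α i, ?_⟩
  rw [← pow_eq_one_iff_of_nonneg (by positivity) two_ne_zero, mul_pow, hnorm]
  field_simp

/-- With `α_p = (1/r)(1 - (1/√(r-1))·(q/p))`, `q = √(r - p²)`, `p ∈ [1, √(r-1)]`,
each column `v_i` of `H_p` satisfies `e^T v_i = 1` and `p‖v_i‖ = 1`, i.e. the columns
lie on the boundary of `S_p` intersected with the unit simplex. -/
theorem stmt8 (r : ℕ) (hr : 2 ≤ r) (p q α : ℝ) (hp1 : 1 ≤ p)
    (hpr : p ≤ Real.sqrt ((r : ℝ) - 1))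
    (hq : q = Real.sqrt ((r : ℝ) - p ^ 2))
    (hα : α = (1 / (r : ℝ)) * (1 - (1 / Real.sqrt ((r : ℝ) - 1)) * (q / p))) :
    ∀ i : Fin r, (∑ j, HpCol r α i j = 1) ∧ p * ‖HpCol r α i‖ = 1 :=
  stmt8_general r p q α hp1 hpr hq hα
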